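/- λx.Ω∥Ω is not typable: there is no context Δ and type α with Δ ⊢ (λx.Ω)∥Ω : α, even though λx.Ω and λx.Ω + Ω are typable with type 1. -/

import Mathlib

-- Computational and parallel types
mutual
  inductive CTy : Type
    | one : CTy
    | tens : CTy → CTy → CTy
    | arr : CTy → PTy → CTy
  inductive PTy : Type
    | ofC : CTy → PTy
    | par : PTy → PTy → PTy
end

-- Type equivalence: AC of ⊗ and ⅋, 1 neutral for ⊗
mutual
  inductive CEq : CTy → CTy → Prop
    | refl (τ) : CEq τ τ
    | symm : CEq τ ρ → CEq ρ τ
    | trans : CEq τ ρ → CEq ρ σ → CEq τ σ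
    | comm (τ ρ) : CEq (.tens τ ρ) (.tens ρ τ)
    | assoc (τ ρ σ) : CEq (.tens (.tens τ ρ) σ) (.tens τ (.tens ρ σ))
    | unit (τ) : CEq (.tens τ .one) τ
    | tensCongr : CEq τ τ' → CEq ρ ρ' → CEq (.tens τ ρ) (.tens τ' ρ')
    | arrCongr : CEq τ τ' → PEq α α' → CEq (.arr τ α) (.arr τ' α')
  inductive PEq : PTy → PTy → Prop
    | refl (α) : PEq α α
    | symm : PEq α β → PEq β α
    | trans : PEq α β → PEq β γ → PEq α γ
    | comm (α β) : PEq (.par α β) (.par β α)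
    | assoc (α β γ) : PEq (.par (.par α β) γ) (.par α (.par β γ))
    | parCongr : PEq α α' → PEq β β' → PEq (.par α β) (.par α' β')
    | ofC : CEq τ τ' → PEq (.ofC τ) (.ofC τ')
end

def Ctx : Type := ℕ → CTy
def Ctx.empty : Ctx := fun _ => CTy.one
def Ctx.tens (Γ Δ : Ctx) : Ctx := fun n => CTy.tens (Γ n) (Δ n)
def Ctx.single (x : ℕ) (τ : CTy) : Ctx := fun n => if n = x then τ else CTy.one
def Ctx.cons (τ : CTy) (Γ : Ctx) : Ctx := fun n =>
  match n with
  | 0 => τ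
  | n+1 => Γ n
def CtxEq (Γ Δ : Ctx) : Prop := ∀ n, CEq (Γ n) (Δ n)

def tensList (l : List CTy) : CTy := l.foldr CTy.tens CTy.one
def tensFin (n : ℕ) (f : Fin n → CTy) : CTy := tensList (List.ofFn f)
def tensCtxFin (n : ℕ) (Δ : Fin n → Ctx) : Ctx := fun x => tensFin n (fun i => Δ i x)

def parList : List PTy → PTy
  | [] => PTy.ofC CTy.one
  | [α] => α
  | α :: β :: rest => PTy.par α (parList (β :: rest))

def parFin (n : ℕ) (f : Fin n → PTy) : PTy := parList (List.ofFn f)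

/-- ⅋ᵏ1 : the par of k copies of 1 (left associated); junk value at 0. -/
def parOnes : ℕ → PTy
  | 0 => PTy.ofC CTy.one
  | 1 => PTy.ofC CTy.one
  | n+2 => PTy.par (parOnes (n+1)) (PTy.ofC CTy.one)

/-- Terms of Λ₊∥ in de Bruijn notation. -/
inductive Tm : Type
  | var : ℕ → Tm
  | lam : Tm → Tm
  | app : Tm → Tm → Tm
  | plus : Tm → Tm → Tm
  | par : Tm → Tm → Tm

def IsValue : Tm → Prop
  | .var _ => True
  | .lam _ => True
  | _ => False

def IsPar : Tm → Prop
  | .par _ _ => True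
  | _ => False

def shiftTm (c : ℕ) : Tm → Tm
  | .var n => if n < c then .var n else .var (n+1)
  | .lam M => .lam (shiftTm (c+1) M)
  | .app M N => .app (shiftTm c M) (shiftTm c N)
  | .plus M N => .plus (shiftTm c M) (shiftTm c N)
  | .par M N => .par (shiftTm c M) (shiftTm c N)

/-- Capture-avoiding substitution `M[V/k]` (de Bruijn). -/
def substTm : Tm → ℕ → Tm → Tm
  | .var n, k, V => if n = k then V else if k < n then .var (n-1) else .var n
  | .lam M, k, V => .lam (substTm M (k+1) (shiftTm 0 V))
  | .app M N, k, V => .app (substTm M k V) (substTm N k V)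
  | .plus M N, k, V => .plus (substTm M k V) (substTm N k V)
  | .par M N, k, V => .par (substTm M k V) (substTm N k V)

def closedUnder : ℕ → Tm → Prop
  | d, .var n => n < d
  | d, .lam M => closedUnder (d+1) M
  | d, .app M N => closedUnder d M ∧ closedUnder d N
  | d, .plus M N => closedUnder d M ∧ closedUnder d N
  | d, .par M N => closedUnder d M ∧ closedUnder d N

def Closed (M : Tm) : Prop := closedUnder 0 M

/-- One-step reduction; the boolean flag records whether a +-reduction is used. -/
inductive Step : Bool → Tm → Tm → Prop
  | beta {M V} : IsValue V → Step false (.app (.lam M) V) (substTm M 0 V)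
  | plusL (M N) : Step true (.plus M N) M
  | plusR (M N) : Step true (.plus M N) N
  | parAppL (M N P) : Step false (.app (.par M N) P) (.par (.app M P) (.app N P))
  | parAppR {V} (M N) : IsValue V → Step false (.app V (.par M N)) (.par (.app V M) (.app V N))
  | parL {b M M'} (N) : Step b M M' → Step b (.par M N) (.par M' N)
  | parR {b N N'} (M) : Step b N N' → Step b (.par M N) (.par M N')
  | appL {b M M'} (N) : Step b M M' → ¬ IsPar M → Step b (.app M N) (.app M' N)
  | appR {b M M' V} : IsValue V → Step b M M' → ¬ IsPar M → Step b (.app V M) (.app V M')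

/-- The two contracta of a single +-redex, reduced in context. -/
inductive PlusPair : Tm → Tm → Tm → Prop
  | base (M N) : PlusPair (.plus M N) M N
  | parL {M M₁ M₂} (N) : PlusPair M M₁ M₂ → PlusPair (.par M N) (.par M₁ N) (.par M₂ N)
  | parR {N N₁ N₂} (M) : PlusPair N N₁ N₂ → PlusPair (.par M N) (.par M N₁) (.par M N₂)
  | appL {M M₁ M₂} (N) : PlusPair M M₁ M₂ → ¬ IsPar M → PlusPair (.app M N) (.app M₁ N) (.app M₂ N)
  | appR {M M₁ M₂ V} : IsValue V → PlusPair M M₁ M₂ → ¬ IsPar M → PlusPair (.app V M) (.app V M₁) (.app V M₂)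

/-- n-step reduction. -/
inductive Steps : ℕ → Tm → Tm → Prop
  | refl (M) : Steps 0 M M
  | head {b M N P n} : Step b M N → Steps n N P → Steps (n+1) M P

/-- A closed term converges iff it reduces to a parallel composition of values. -/
def Converges (M : Tm) : Prop :=
  ∃ (n : ℕ) (V : Tm) (Vs : List Tm), IsValue V ∧ (∀ W ∈ Vs, IsValue W) ∧
    Steps n M (Vs.foldl Tm.par V)

/-- Typing derivations, indexed by the measure |π|. -/
inductive Deriv : Ctx → Tm → PTy → ℕ → Prop
  | ax (x : ℕ) (τ : CTy) : Deriv (Ctx.single x τ) (.var x) (.ofC τ) 0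
  | lamI (n : ℕ) (Δ : Fin n → Ctx) (τ : Fin n → CTy) (α : Fin n → PTy) (ms : Fin n → ℕ)
      (M : Tm) :
      (∀ i, Deriv (Ctx.cons (τ i) (Δ i)) M (α i) (ms i)) →
      Deriv (tensCtxFin n Δ) (.lam M)
        (.ofC (tensFin n (fun i => .arr (τ i) (α i)))) (∑ i, ms i)
  | appE (k : ℕ) (hk : 0 < k) (nf : Fin k → ℕ) (hn : ∀ i, 0 < nf i)
      (τ : ∀ i : Fin k, Fin (nf i) → CTy) (α : ∀ i : Fin k, Fin (nf i) → PTy)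
      (Δ : Ctx) (Γ : Fin k → Ctx) (m0 : ℕ) (ms : Fin k → ℕ) (M N : Tm) :
      Deriv Δ M (parFin k (fun i => .ofC (tensFin (nf i) (fun j => .arr (τ i j) (α i j))))) m0 →
      (∀ i, Deriv (Γ i) N (parFin (nf i) (fun j => .ofC (τ i j))) (ms i)) →
      Deriv (Ctx.tens Δ (tensCtxFin k Γ)) (.app M N)
        (parFin k (fun i => parFin (nf i) (α i)))
        ((m0 + (∑ i, ms i) + (∑ i, 2 * nf i)) - 1)
  | plusL {Δ M α m} (N) : Deriv Δ M α m → Deriv Δ (.plus M N) α (m+1)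
  | plusR {Δ N α m} (M) : Deriv Δ N α m → Deriv Δ (.plus M N) α (m+1)
  | parI {Δ Γ M N α β m m'} : Deriv Δ M α m → Deriv Γ N β m' →
      Deriv (Ctx.tens Δ Γ) (.par M N) (.par α β) (m + m')
  | eqv {Γ Γ' M α α' m} : Deriv Γ M α m → CtxEq Γ Γ' → PEq α α' → Deriv Γ' M α' m

def deltaTm : Tm := .lam (.app (.var 0) (.var 0))
def OmegaTm : Tm := .app deltaTm deltaTm
def Idt : Tm := .lam (.var 0)
def dstarTm : Tm := .lam (.lam (.app (.var 1) (.var 1)))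
def YstarTm : Tm := .app dstarTm dstarTm

/-!
Typing `Ω = δ δ` with `δ = λx. x x` forces `δ` to have a type `(T ⊸ α) ⊗ 1` and `T` to be
a type of `δ` as well. Every arrow `τ ⊸ β` occurring at the top of a type of `δ` has
`τ ≡ (e ⊸ β) ⊗ e`, since the body `x x` uses `x` once as a function and once as its argument.
Applied to `T ≡ (e ⊸ α) ⊗ e` this gives an infinite descent: the arrow `e ⊸ α` of `T` has a
domain with strictly fewer top-level arrows, all of them again arrows of `T`. So `Ω` is not
typable, and the `∥` rule needs both components typed.

The collapse of `⊸E` to its single-component form for values comes from counting `⅋`-components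
up to `≡`: a value only has types `≡` to some `ofC τ`, which has one component.
-/

instance ctySetoid : Setoid CTy := ⟨CEq, ⟨CEq.refl, CEq.symm, CEq.trans⟩⟩

instance arrowSetoid : Setoid (CTy × PTy) where
  r p q := CEq p.1 q.1 ∧ PEq p.2 q.2
  iseqv := ⟨fun _ => ⟨.refl _, .refl _⟩, fun h => ⟨h.1.symm, h.2.symm⟩,
    fun h h' => ⟨h.1.trans h'.1, h.2.trans h'.2⟩⟩

abbrev ArrowClass : Type := Quotient arrowSetoid

def CTy.arrows : CTy → Multiset ArrowClass
  | .one => 0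
  | .tens τ ρ => τ.arrows + ρ.arrows
  | .arr τ α => {⟦(τ, α)⟧}

def PTy.components : PTy → Multiset (Quotient ctySetoid)
  | .ofC τ => {⟦τ⟧}
  | .par α β => α.components + β.components

theorem CEq.arrows_eq {τ ρ : CTy} : CEq τ ρ → τ.arrows = ρ.arrows
  | .refl _ => rfl
  | .symm h => h.arrows_eq.symm
  | .trans h h' => h.arrows_eq.trans h'.arrows_eq
  | .comm _ _ => add_comm _ _
  | .assoc _ _ _ => add_assoc _ _ _
  | .unit _ => add_zero _
  | .tensCongr h h' => congrArg₂ (· + ·) h.arrows_eq h'.arrows_eq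
  | .arrCongr h h' => congrArg ({·}) (Quotient.sound (s := arrowSetoid) ⟨h, h'⟩)

theorem PEq.components_eq {α β : PTy} : PEq α β → α.components = β.components
  | .refl _ => rfl
  | .symm h => h.components_eq.symm
  | .trans h h' => h.components_eq.trans h'.components_eq
  | .comm _ _ => add_comm _ _
  | .assoc _ _ _ => add_assoc _ _ _
  | .parCongr h h' => congrArg₂ (· + ·) h.components_eq h'.components_eq
  | .ofC h => congrArg ({·}) (Quotient.sound (s := ctySetoid) h)

theorem peq_ofC_iff {τ ρ : CTy} : PEq (.ofC τ) (.ofC ρ) ↔ CEq τ ρ :=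
  ⟨fun h => Quotient.exact (Multiset.singleton_inj.1 h.components_eq), PEq.ofC⟩

theorem components_parList : ∀ l : List PTy, l ≠ [] →
    (parList l).components = (l.map PTy.components).sum
  | [], h => absurd rfl h
  | [_], _ => by simp [parList]
  | α :: β :: l, _ => by
      simp [parList, PTy.components, components_parList (β :: l) (List.cons_ne_nil _ _)]

theorem card_components_parFin_ofC {k : ℕ} (hk : 0 < k) (f : Fin k → CTy) :
    Multiset.card (parFin k fun i => .ofC (f i)).components = k := by
  rw [parFin, components_parList _ (by simpa using hk.ne')]
  simp [PTy.components, List.map_ofFn, Function.comp_def, List.sum_ofFn, Multiset.card_sum]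

theorem parFin_of_eq_one {n : ℕ} (h : n = 1) (f : Fin n → PTy) (i : Fin n) :
    parFin n f = f i := by
  subst h
  obtain rfl := Subsingleton.elim i 0
  simp [parFin, List.ofFn_succ, parList]

theorem tensFin_of_eq_one {n : ℕ} (h : n = 1) (f : Fin n → CTy) (i : Fin n) :
    tensFin n f = .tens (f i) .one := by
  subst h
  obtain rfl := Subsingleton.elim i 0
  simp [tensFin, List.ofFn_succ, tensList]

theorem arrows_tensList : ∀ l : List CTy, (tensList l).arrows = (l.map CTy.arrows).sum
  | [] => rfl
  | τ :: l => by simp [tensList, CTy.arrows, ← arrows_tensList l]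

theorem arrows_tensFin_arr {n : ℕ} (τ : Fin n → CTy) (α : Fin n → PTy) :
    (tensFin n fun i => .arr (τ i) (α i)).arrows = ∑ i, {⟦(τ i, α i)⟧} := by
  simp [tensFin, arrows_tensList, List.map_ofFn, Function.comp_def, List.sum_ofFn, CTy.arrows]

theorem CtxEq.trans {Γ Δ Θ : Ctx} (h : CtxEq Γ Δ) (h' : CtxEq Δ Θ) : CtxEq Γ Θ :=
  fun x => (h x).trans (h' x)

theorem CtxEq.refl (Γ : Ctx) : CtxEq Γ Γ := fun _ => .refl _

namespace Deriv

variable {Γ : Ctx} {β : PTy} {m : ℕ}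

theorem lam_one (M : Tm) : Deriv Ctx.empty (.lam M) (.ofC .one) 0 :=
  lamI 0 (fun _ => Ctx.empty) (fun _ => .one) (fun _ => .ofC .one) (fun _ => 0) M Fin.elim0

theorem var_inv {x : ℕ} {σ : CTy} (h : Deriv Γ (.var x) β m) (hβ : PEq β (.ofC σ)) :
    CEq σ (Γ x) := by
  generalize hM : Tm.var x = M at h
  induction h generalizing σ with
  | ax y τ =>
    cases hM
    simpa [Ctx.single] using (peq_ofC_iff.1 hβ).symm
  | eqv _ hΓ hα ih => exact (ih (hα.trans hβ) hM).trans (hΓ x)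
  | _ => cases hM

theorem lam_inv {M : Tm} (h : Deriv Γ (.lam M) β m) :
    ∃ (n : ℕ) (Δ : Fin n → Ctx) (τ : Fin n → CTy) (α : Fin n → PTy) (ms : Fin n → ℕ),
      (∀ i, Deriv (Ctx.cons (τ i) (Δ i)) M (α i) (ms i)) ∧
      PEq (.ofC (tensFin n fun i => .arr (τ i) (α i))) β ∧
      CtxEq (tensCtxFin n Δ) Γ := by
  generalize hN : Tm.lam M = N at h
  induction h with
  | lamI n Δ τ α ms M hprem =>
    cases hN
    exact ⟨n, Δ, τ, α, ms, hprem, .refl _, .refl _⟩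
  | eqv _ hΓ hβ ih =>
    obtain ⟨n, Δ, τ, α, ms, hprem, hβ', hΓ'⟩ := ih hN
    exact ⟨n, Δ, τ, α, ms, hprem, hβ'.trans hβ, hΓ'.trans hΓ⟩
  | _ => cases hN

theorem app_inv {M N : Tm} (h : Deriv Γ (.app M N) β m) :
    ∃ (k : ℕ) (_ : 0 < k) (nf : Fin k → ℕ) (_ : ∀ i, 0 < nf i)
      (τ : ∀ i : Fin k, Fin (nf i) → CTy) (α : ∀ i : Fin k, Fin (nf i) → PTy)
      (Δ : Ctx) (G : Fin k → Ctx) (m₀ : ℕ) (ms : Fin k → ℕ),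
      Deriv Δ M (parFin k fun i => .ofC (tensFin (nf i) fun j => .arr (τ i j) (α i j))) m₀ ∧
      (∀ i, Deriv (G i) N (parFin (nf i) fun j => .ofC (τ i j)) (ms i)) ∧
      PEq (parFin k fun i => parFin (nf i) (α i)) β ∧
      CtxEq (Ctx.tens Δ (tensCtxFin k G)) Γ := by
  generalize hP : Tm.app M N = P at h
  induction h with
  | appE k hk nf hn τ α Δ G m₀ ms M N hfun harg =>
    cases hP
    exact ⟨k, hk, nf, hn, τ, α, Δ, G, m₀, ms, hfun, harg, .refl _, .refl _⟩
  | eqv _ hΓ hβ ih =>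
    obtain ⟨k, hk, nf, hn, τ, α, Δ, G, m₀, ms, hfun, harg, hβ', hΓ'⟩ := ih hP
    exact ⟨k, hk, nf, hn, τ, α, Δ, G, m₀, ms, hfun, harg, hβ'.trans hβ, hΓ'.trans hΓ⟩
  | _ => cases hP

theorem par_inv {M N : Tm} (h : Deriv Γ (.par M N) β m) :
    ∃ Δ₁ Δ₂ γ₁ γ₂ m₁ m₂, Deriv Δ₁ M γ₁ m₁ ∧ Deriv Δ₂ N γ₂ m₂ := by
  generalize hP : Tm.par M N = P at h
  induction h with
  | parI h₁ h₂ =>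
    cases hP
    exact ⟨_, _, _, _, _, _, h₁, h₂⟩
  | eqv _ _ _ ih => exact ih hP
  | _ => cases hP

theorem exists_ofC_of_isValue {M : Tm} (h : Deriv Γ M β m) (hM : IsValue M) :
    ∃ σ, PEq (.ofC σ) β := by
  induction h with
  | ax => exact ⟨_, .refl _⟩
  | lamI => exact ⟨_, .refl _⟩
  | eqv _ _ hβ ih =>
    obtain ⟨σ, hσ⟩ := ih hM
    exact ⟨σ, hσ.trans hβ⟩
  | _ => exact hM.elim

theorem eq_one_of_isValue {M : Tm} {k : ℕ} {f : Fin k → CTy}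
    (h : Deriv Γ M (parFin k fun i => .ofC (f i)) m) (hM : IsValue M) (hk : 0 < k) : k = 1 := by
  obtain ⟨σ, hσ⟩ := h.exists_ofC_of_isValue hM
  have := congrArg Multiset.card hσ.components_eq
  rwa [card_components_parFin_ofC hk, PTy.components, Multiset.card_singleton, eq_comm] at this

theorem app_inv_of_isValue {M N : Tm} (h : Deriv Γ (.app M N) β m) (hM : IsValue M)
    (hN : IsValue N) :
    ∃ Δ₁ Δ₂ τ α m₁ m₂, Deriv Δ₁ M (.ofC (.tens (.arr τ α) .one)) m₁ ∧ Deriv Δ₂ N (.ofC τ) m₂ ∧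
      PEq α β ∧ CtxEq (Δ₁.tens Δ₂) Γ := by
  obtain ⟨k, hk, nf, hnf, τ, α, Δ, G, m₀, ms, hfun, harg, hβ, hΓ⟩ := h.app_inv
  obtain rfl : k = 1 := hfun.eq_one_of_isValue hM hk
  have hn : nf 0 = 1 := (harg 0).eq_one_of_isValue hN (hnf 0)
  let j : Fin (nf 0) := ⟨0, hnf 0⟩
  refine ⟨Δ, G 0, τ 0 j, α 0 j, m₀, ms 0, ?_, ?_, ?_, fun x => ?_⟩
  · rwa [parFin_of_eq_one rfl _ 0, tensFin_of_eq_one hn _ j] at hfun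
  · simpa only [parFin_of_eq_one hn _ j] using harg 0
  · rwa [parFin_of_eq_one rfl _ 0, parFin_of_eq_one hn _ j] at hβ
  · refine .trans ?_ (hΓ x)
    show CEq _ (.tens (Δ x) (tensFin 1 fun i => G i x))
    rw [tensFin_of_eq_one rfl _ 0]
    exact .tensCongr (.refl _) (.symm (.unit _))

end Deriv

def IsSelfApplicable (σ : CTy) : Prop :=
  ∀ τ α, (⟦(τ, α)⟧ : ArrowClass) ∈ σ.arrows → ∃ e, CEq τ (.tens (.arr e α) e)

theorem Deriv.isSelfApplicable_of_delta {Γ : Ctx} {σ : CTy} {m : ℕ}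
    (h : Deriv Γ deltaTm (.ofC σ) m) : IsSelfApplicable σ := by
  obtain ⟨n, _, τ, α, _, hbody, hσ, -⟩ := h.lam_inv
  intro ρ γ hmem
  rw [← (peq_ofC_iff.1 hσ).arrows_eq, arrows_tensFin_arr] at hmem
  obtain ⟨i, -, hi⟩ := Multiset.mem_sum.1 hmem
  obtain ⟨hρ, hγ⟩ : CEq ρ (τ i) ∧ PEq γ (α i) := Quotient.exact (Multiset.mem_singleton.1 hi)
  obtain ⟨Δ₁, Δ₂, ρ', γ', _, _, hfun, harg, hγ', hctx⟩ :=
    (hbody i).app_inv_of_isValue trivial trivial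
  have hτ : CEq (τ i) ((Δ₁ 0).tens (Δ₂ 0)) := (hctx 0).symm
  have hΔ₁ : CEq (Δ₁ 0) ((CTy.arr ρ' γ').tens .one) := (hfun.var_inv (.refl _)).symm
  have hΔ₂ : CEq (Δ₂ 0) ρ' := (harg.var_inv (.refl _)).symm
  have hunit : CEq ((CTy.arr ρ' γ').tens .one) (.arr ρ' γ) :=
    (CEq.unit _).trans (.arrCongr (.refl _) (hγ'.trans hγ.symm))
  exact ⟨ρ', hρ.trans <| hτ.trans <| .tensCongr (hΔ₁.trans hunit) hΔ₂⟩

theorem IsSelfApplicable.not_arrows_le {σ : CTy} (hσ : IsSelfApplicable σ) (d : CTy) (γ : PTy)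
    (hmem : (⟦(d, γ)⟧ : ArrowClass) ∈ σ.arrows) : ¬ d.arrows ≤ σ.arrows := by
  intro hle
  obtain ⟨e, he⟩ := hσ d γ hmem
  have hd : d.arrows = ⟦(e, γ)⟧ ::ₘ e.arrows := by
    simp [he.arrows_eq, CTy.arrows, Multiset.singleton_add]
  have : Multiset.card e.arrows < Multiset.card d.arrows := by simp [hd]
  rw [hd] at hle
  exact hσ.not_arrows_le e γ (Multiset.mem_of_le hle (Multiset.mem_cons_self _ _))
    ((Multiset.le_cons_self _ _).trans hle)
termination_by Multiset.card d.arrows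

theorem IsSelfApplicable.not_ceq {σ e : CTy} {α : PTy} (hσ : IsSelfApplicable σ) :
    ¬ CEq σ (.tens (.arr e α) e) := by
  intro h
  have hσe : σ.arrows = ⟦(e, α)⟧ ::ₘ e.arrows := by
    simp [h.arrows_eq, CTy.arrows, Multiset.singleton_add]
  exact hσ.not_arrows_le e α (by simp [hσe]) (by simp [hσe, Multiset.le_cons_self])

theorem omega_not_typable {Γ : Ctx} {β : PTy} {m : ℕ} : ¬ Deriv Γ OmegaTm β m := by
  intro h
  obtain ⟨_, _, τ, α, _, _, hfun, harg, -, -⟩ := h.app_inv_of_isValue trivial trivial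
  obtain ⟨e, he⟩ := hfun.isSelfApplicable_of_delta τ α (by simp [CTy.arrows])
  exact harg.isSelfApplicable_of_delta.not_ceq he

theorem lam_omega_par_omega_not_typable :
    (∃ m, Deriv Ctx.empty (.lam OmegaTm) (.ofC .one) m) ∧
    (∃ m, Deriv Ctx.empty (.plus (.lam OmegaTm) OmegaTm) (.ofC .one) m) ∧
    ¬ ∃ (Δ : Ctx) (α : PTy) (m : ℕ), Deriv Δ (.par (.lam OmegaTm) OmegaTm) α m := by
  refine ⟨⟨0, .lam_one _⟩, ⟨1, .plusL _ (.lam_one _)⟩, ?_⟩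
  rintro ⟨Δ, α, m, h⟩
  obtain ⟨_, _, _, _, _, _, -, hΩ⟩ := h.par_inv
  exact omega_not_typable hΩ
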